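/- Algorithm correctness for heap construction from suffix trie: given the suffix trie of S[1..n] (unique terminator), label each leaf with the starting position of its suffix; then, processing i = 1,...,n in order, move the label i from its leaf to the highest (closest to the root) ancestor that has not yet received a label (if all ancestors are labelled, leave it on the leaf). The resulting labelled set of nodes, restricted to labelled nodes, forms the position heap of S: it is prefix-closed, labels increase from parent to child among labelled nodes, and the path label of the node receiving label i is a prefix of S[i..n]. -/

import Mathlib

/-!
At step `i` the construction labels the shortest prefix of `S[i..n]` that is not yet labelled, so
all proper prefixes of the new node are already labelled, with smaller labels: prefix-closedness
and heap order are preserved. The fallback to the leaf never fires, because `S[i..n]` itself is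
never labelled before step `i`: an earlier label `j` sits on a prefix of `S[j..n]`, and with a
unique terminator no suffix is a prefix of a longer one.
-/

/-- The suffix-trie relabelling construction.  `trieAssign S i` is the list of
nodes of the suffix trie of `S` that have received labels `0, ..., i` (the
`j`-th entry is the node labelled `j`): the root (path label `[]`) is
pre-labelled `0`, and for `i = 1, ..., n` the label `i` is moved from the leaf
of the suffix `S[i..n]` to its highest (shortest) unlabelled ancestor — i.e.
the shortest prefix of `S[i..n]` not yet labelled — or left on the leaf itself
if all its ancestors are labelled. -/
def trieAssign {α : Type} [DecidableEq α] (S : List α) : ℕ → List (List α)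
  | 0 => [([] : List α)]
  | i + 1 =>
    let prev := trieAssign S i
    prev ++ [(((S.drop i).inits).find? (fun p => decide (p ∉ prev))).getD (S.drop i)]

namespace List

variable {α : Type*}

theorem getElem?_concat_eq_some {l : List α} {a b : α} {i : ℕ} :
    (l ++ [a])[i]? = some b ↔ l[i]? = some b ∨ i = l.length ∧ a = b := by
  rw [getElem?_append]
  split_ifs with hi
  · simp [Nat.ne_of_lt hi]
  · rw [getElem?_singleton]
    have : l[i]? = none := getElem?_eq_none (by omega)
    split_ifs with h0 <;> simp [this] <;> omega

theorem find?_inits_eq_false_of_prefix {s e q : List α} {P : List α → Bool}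
    (h : s.inits.find? P = some e) (hq : q <+: e) (hne : q ≠ e) : P q = false := by
  obtain ⟨-, k, hk, rfl, hbefore⟩ := find?_eq_some_iff_getElem.mp h
  rw [getElem_inits] at hq hne
  have hk' : k ≤ s.length := by rw [length_inits] at hk; omega
  have hlt : q.length < k := by
    have hle := hq.length_le
    rw [length_take_of_le hk'] at hle
    exact lt_of_le_of_ne hle fun hl => hne (hq.eq_of_length (by simp [hl, hk']))
  have := hbefore q.length (by omega)
  rwa [getElem_inits, ← prefix_iff_eq_take.mp (hq.trans (take_prefix k s)),
    Bool.not_eq_true'] at this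

theorem not_drop_prefix_drop_append_singleton {T : List α} {c : α} (hc : c ∉ T) {a b : ℕ}
    (hab : a < b) (hb : b ≤ T.length) : ¬ (T ++ [c]).drop b <+: (T ++ [c]).drop a := by
  rintro ⟨t, ht⟩
  rw [drop_append_of_le_length hb, drop_append_of_le_length (hab.le.trans hb)] at ht
  have ht0 : t ≠ [] := by
    rintro rfl
    have := congrArg length ht
    simp only [append_nil, length_append, length_drop] at this
    omega
  have hdrop := congrArg dropLast ht
  rw [dropLast_append_of_ne_nil ht0, dropLast_concat] at hdrop
  exact hc ((drop_sublist a T).subset (hdrop ▸ by simp))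

end List

structure IsHeapOrderedTrie {α : Type*} (H : List (List α)) : Prop where
  nodup : H.Nodup
  prefix_mem : ∀ p ∈ H, ∀ q : List α, q <+: p → q ∈ H
  index_lt : ∀ i j : ℕ, ∀ p q : List α,
    H[i]? = some p → H[j]? = some q → p <+: q → p ≠ q → i < j

namespace IsHeapOrderedTrie

variable {α : Type*}

theorem singleton_nil : IsHeapOrderedTrie [([] : List α)] where
  nodup := List.nodup_singleton _
  prefix_mem p hp q hq := by
    rw [List.mem_singleton] at hp ⊢
    exact List.prefix_nil.mp (hp ▸ hq)
  index_lt i j p q hp hq _ hne := by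
    simp only [List.getElem?_singleton, Option.ite_none_right_eq_some, Option.some.injEq] at hp hq
    exact absurd (hp.2.symm.trans hq.2) hne

theorem concat {H : List (List α)} {e : List α} (h : IsHeapOrderedTrie H) (he : e ∉ H)
    (hpre : ∀ q, q <+: e → q ≠ e → q ∈ H) : IsHeapOrderedTrie (H ++ [e]) where
  nodup := h.nodup.append (List.nodup_singleton e) (List.disjoint_singleton.mpr he)
  prefix_mem p hp q hq := by
    rcases List.mem_append.mp hp with hp | hp
    · exact List.mem_append_left _ (h.prefix_mem p hp q hq)
    · rw [List.mem_singleton] at hp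
      subst hp
      by_cases hqe : q = p
      · simp [hqe]
      · exact List.mem_append_left _ (hpre q hq hqe)
  index_lt i j p q hp hq hpq hne := by
    rw [List.getElem?_concat_eq_some] at hp hq
    rcases hq with hq | ⟨rfl, rfl⟩
    · rcases hp with hp | ⟨rfl, rfl⟩
      · exact h.index_lt i j p q hp hq hpq hne
      · exact absurd (h.prefix_mem q (List.mem_iff_getElem?.mpr ⟨j, hq⟩) e hpq) he
    · rcases hp with hp | ⟨rfl, rfl⟩
      · exact (List.getElem?_eq_some_iff.mp hp).1
      · exact absurd rfl hne

end IsHeapOrderedTrie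

section

variable {α : Type} [DecidableEq α]

theorem length_trieAssign (S : List α) (i : ℕ) : (trieAssign S i).length = i + 1 := by
  induction i with
  | zero => rfl
  | succ i ih => simp [trieAssign, ih]

theorem getElem?_zero_trieAssign (S : List α) (i : ℕ) : (trieAssign S i)[0]? = some [] := by
  induction i with
  | zero => rfl
  | succ i ih =>
    rw [trieAssign, List.getElem?_append_left (by rw [length_trieAssign]; omega), ih]

theorem prefix_drop_of_getElem?_trieAssign {S p : List α} {i j : ℕ}
    (h : (trieAssign S i)[j + 1]? = some p) : p <+: S.drop j := by
  induction i with
  | zero => simp [trieAssign] at h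
  | succ i ih =>
    rw [trieAssign, List.getElem?_concat_eq_some, length_trieAssign] at h
    rcases h with h | ⟨hj, rfl⟩
    · exact ih h
    · obtain rfl : j = i := by omega
      cases hfind : (S.drop j).inits.find? _ with
      | none => exact List.prefix_refl _
      | some e => exact (List.mem_inits _ _).mp (List.mem_of_find?_eq_some hfind)

variable {T : List α} {c : α}

theorem drop_not_mem_trieAssign (hc : c ∉ T) {i : ℕ} (hi : i ≤ T.length) :
    (T ++ [c]).drop i ∉ trieAssign (T ++ [c]) i := by
  intro hmem
  obtain ⟨k, hk⟩ := List.mem_iff_getElem?.mp hmem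
  cases k with
  | zero =>
    rw [getElem?_zero_trieAssign, Option.some.injEq, eq_comm, List.drop_eq_nil_iff,
      List.length_append, List.length_singleton] at hk
    omega
  | succ k =>
    have hki : k < i := by
      have := (List.getElem?_eq_some_iff.mp hk).1
      rw [length_trieAssign] at this
      omega
    exact List.not_drop_prefix_drop_append_singleton hc hki hi
      (prefix_drop_of_getElem?_trieAssign hk)

theorem isHeapOrderedTrie_trieAssign (hc : c ∉ T) {i : ℕ} (hi : i ≤ T.length + 1) :
    IsHeapOrderedTrie (trieAssign (T ++ [c]) i) := by
  induction i with
  | zero => exact .singleton_nil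
  | succ i ih =>
    have hiT : i ≤ T.length := by omega
    rw [trieAssign]
    cases hfind : ((T ++ [c]).drop i).inits.find? (fun p => decide (p ∉ trieAssign (T ++ [c]) i))
      with
    | none =>
      refine absurd ?_ (drop_not_mem_trieAssign hc hiT)
      simpa using List.find?_eq_none.mp hfind _ ((List.mem_inits _ _).mpr (List.prefix_refl _))
    | some e =>
      refine (ih (by omega)).concat (by simpa using List.find?_some hfind) fun q hq hne => ?_
      simpa using List.find?_inits_eq_false_of_prefix hfind hq hne

end

/-- For `S[1..n]` with a unique terminator, the suffix-trie
relabelling construction produces the position heap of `S`: the labelled nodes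
are pairwise distinct, form a prefix-closed set, labels increase strictly from
parents to children among labelled nodes, and the path label of the node
receiving label `i` is a prefix of `S[i..n]`. -/
theorem trieAssign_is_positionHeap
    {α : Type} [DecidableEq α]
    (S T : List α) (c : α) (hS : S = T ++ [c]) (hc : c ∉ T) :
    (trieAssign S S.length).Nodup ∧
    (∀ p ∈ trieAssign S S.length, ∀ q : List α, q <+: p →
      q ∈ trieAssign S S.length) ∧
    (∀ i j : ℕ, ∀ p q : List α,
      (trieAssign S S.length)[i]? = some p → (trieAssign S S.length)[j]? = some q →
      p <+: q → p ≠ q → i < j) ∧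
    (∀ i : ℕ, 1 ≤ i → i ≤ S.length → ∀ p : List α,
      (trieAssign S S.length)[i]? = some p → p <+: S.drop (i - 1)) := by
  subst hS
  have hH := isHeapOrderedTrie_trieAssign hc (i := (T ++ [c]).length) (by simp)
  refine ⟨hH.nodup, hH.prefix_mem, hH.index_lt, fun i hi _ p hp => ?_⟩
  obtain ⟨j, rfl⟩ := Nat.exists_eq_add_of_le' hi
  exact prefix_drop_of_getElem?_trieAssign hp
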